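/- Let A = x dy + dz on ℝ³ and consider the complexified spinor process Sp1 = ρ(∂/∂x + i ∂/∂y) for a smooth real function ρ. The heat 1-form Q = L_{Sp1} A = ρ(dy − i dx) + i d(ρx) satisfies Q ∧ dQ = −i ρ dρ ∧ dx ∧ dy. Hence whenever dρ ∧ dx ∧ dy ≠ 0 and ρ ≠ 0, the spinor process is irreversible (Q ∧ dQ ≠ 0). -/

import Mathlib

open scoped BigOperators

/-- A raw complex-valued differential `k`-form on ℝⁿ, evaluated on complexified
tangent vectors. -/
abbrev FormC (n k : ℕ) := (Fin n → ℝ) → (Fin k → (Fin n → ℂ)) → ℂ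

/-- Exterior derivative of a raw complex `k`-form (complex-linear extension in the
vector slots). -/
noncomputable def extdC {n k : ℕ} (ω : FormC n k) : FormC n (k + 1) :=
  fun x v => ∑ i : Fin (k + 1), (-1 : ℂ) ^ (i : ℕ) *
    ∑ j : Fin n, v i j *
      fderiv ℝ (fun y => ω y (i.removeNth v)) x (Pi.single j 1)

/-- Wedge product of raw complex forms. -/
noncomputable def wedgeC {n k l : ℕ} (α : FormC n k) (β : FormC n l) : FormC n (k + l) :=
  fun x v => ((1 : ℂ) / ((Nat.factorial k : ℂ) * (Nat.factorial l : ℂ))) *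
    ∑ σ : Equiv.Perm (Fin (k + l)), ((Equiv.Perm.sign σ : ℤ) : ℂ) *
      (α x (fun i => v (σ (Fin.castAdd l i))) * β x (fun j => v (σ (Fin.natAdd k j))))

/-- Interior product with a complexified vector field. -/
def iprodC {n k : ℕ} (X : (Fin n → ℝ) → (Fin n → ℂ)) (ω : FormC n (k + 1)) : FormC n k :=
  fun x v => ω x (Fin.cons (X x) v)

/-- The complexification of the Darboux 1-form `A = x dy + dz` on ℝ³. -/
noncomputable def Adarboux : FormC 3 1 := fun p v => (p 0 : ℂ) * v 0 1 + v 0 2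

/-- The heat 1-form of a (complex) process `X`, by Cartan's magic formula. -/
noncomputable def heatC (X : (Fin 3 → ℝ) → (Fin 3 → ℂ)) : FormC 3 1 :=
  iprodC X (extdC Adarboux) + extdC (iprodC X Adarboux)

noncomputable def dxC : FormC 3 1 := fun _ v => v 0 0
noncomputable def dyC : FormC 3 1 := fun _ v => v 0 1
lemma rm0 {α : Type*} (v : Fin 2 → α) : Fin.removeNth (0:Fin 2) v = fun _ => v 1 := by
  funext j
  have : j = 0 := Subsingleton.elim _ _
  subst this
  show v (Fin.succAbove 0 0) = v 1
  congr 1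

lemma rm1 {α : Type*} (v : Fin 2 → α) : Fin.removeNth (1:Fin 2) v = fun _ => v 0 := by
  funext j
  have : j = 0 := Subsingleton.elim _ _
  subst this
  show v (Fin.succAbove 1 0) = v 0
  congr 1

lemma fderiv_Ad (w : Fin 1 → Fin 3 → ℂ) (x : Fin 3 → ℝ) (u : Fin 3 → ℝ) :
    fderiv ℝ (fun y => Adarboux y w) x u = (u 0 : ℂ) * w 0 1 := by
  have h : HasFDerivAt (fun y => Adarboux y w)
      ((w 0 1) • (Complex.ofRealCLM.comp (ContinuousLinearMap.proj 0))) x := by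
    unfold Adarboux
    exact ((Complex.ofRealCLM.hasFDerivAt.comp x (hasFDerivAt_apply 0 x)).mul_const
      (w 0 1)).add_const (w 0 2)
  rw [h.fderiv]
  simp [mul_comm]

lemma extd_Ad (x : Fin 3 → ℝ) (v : Fin 2 → Fin 3 → ℂ) :
    extdC Adarboux x v = v 0 0 * v 1 1 - v 1 0 * v 0 1 := by
  unfold extdC
  rw [Fin.sum_univ_two]
  rw [rm0 v, rm1 v]
  rw [Fin.sum_univ_three, Fin.sum_univ_three]
  simp [fderiv_Ad, Pi.single_apply]
  ring

variable (ρ : (Fin 3 → ℝ) → ℝ)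

lemma extd_zero (f : (Fin 3 → ℝ) → ℂ) (x : Fin 3 → ℝ) (v : Fin 1 → Fin 3 → ℂ) :
    extdC (fun p (_ : Fin 0 → Fin 3 → ℂ) => f p) x v
      = ∑ j : Fin 3, v 0 j * fderiv ℝ f x (Pi.single j 1) := by
  unfold extdC
  rw [Fin.sum_univ_one]
  simp

lemma heat_part1 (X : (Fin 3 → ℝ) → (Fin 3 → ℂ))
    (hX : X = fun p => fun j => (ρ p : ℂ) * (![1, Complex.I, 0] j))
    (x : Fin 3 → ℝ) (v : Fin 1 → Fin 3 → ℂ) :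
    iprodC X (extdC Adarboux) x v = (ρ x : ℂ) * (v 0 1 - Complex.I * v 0 0) := by
  subst hX
  unfold iprodC
  rw [extd_Ad]
  rw [show ((Fin.cons (fun j => (ρ x : ℂ) * (![1, Complex.I, 0] j)) v : Fin 2 → Fin 3 → ℂ) 0)
      = fun j => (ρ x : ℂ) * (![1, Complex.I, 0] j) from Fin.cons_zero _ _,
    show ((Fin.cons (fun j => (ρ x : ℂ) * (![1, Complex.I, 0] j)) v : Fin 2 → Fin 3 → ℂ) 1)
      = v 0 from Fin.cons_succ _ _ 0]
  simp
  ring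

lemma heat_part2 (X : (Fin 3 → ℝ) → (Fin 3 → ℂ))
    (hX : X = fun p => fun j => (ρ p : ℂ) * (![1, Complex.I, 0] j)) :
    iprodC X Adarboux = fun x (_ : Fin 0 → Fin 3 → ℂ) =>
      Complex.I * ((ρ x * x 0 : ℝ) : ℂ) := by
  subst hX
  funext x v
  unfold iprodC Adarboux
  simp [Fin.cons_zero]
  ring

lemma extd_I_mul (f : (Fin 3 → ℝ) → ℂ) (hf : Differentiable ℝ f) (x : Fin 3 → ℝ)
    (v : Fin 1 → Fin 3 → ℂ) :
    extdC (fun p (_ : Fin 0 → Fin 3 → ℂ) => Complex.I * f p) x v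
      = Complex.I * extdC (fun p (_ : Fin 0 → Fin 3 → ℂ) => f p) x v := by
  rw [extd_zero, extd_zero, Finset.mul_sum]
  refine Finset.sum_congr rfl fun j _ => ?_
  rw [fderiv_const_mul (hf x) Complex.I]
  simp
  ring

lemma fderiv_rho_cast (hρ : ContDiff ℝ (⊤ : ℕ∞) ρ) (x u : Fin 3 → ℝ) :
    fderiv ℝ (fun y => ((ρ y : ℝ) : ℂ)) x u = ((fderiv ℝ ρ x u : ℝ) : ℂ) := by
  have h : HasFDerivAt (fun y => ((ρ y : ℝ) : ℂ))
      (Complex.ofRealCLM.comp (fderiv ℝ ρ x)) x :=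
    Complex.ofRealCLM.hasFDerivAt.comp x ((hρ.differentiable (by simp) x).hasFDerivAt)
  rw [h.fderiv]; rfl

lemma hasFDeriv_g (hρ : ContDiff ℝ (⊤ : ℕ∞) ρ) (x : Fin 3 → ℝ) :
    HasFDerivAt (fun y : Fin 3 → ℝ => ρ y * y 0)
      (ρ x • (ContinuousLinearMap.proj 0) + x 0 • fderiv ℝ ρ x) x := by
  exact ((hρ.differentiable (by simp) x).hasFDerivAt).mul (hasFDerivAt_apply 0 x)

lemma fderiv_g_cast (hρ : ContDiff ℝ (⊤ : ℕ∞) ρ) (x u : Fin 3 → ℝ) :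
    fderiv ℝ (fun y : Fin 3 → ℝ => ((ρ y * y 0 : ℝ) : ℂ)) x u
      = ((ρ x * u 0 + x 0 * fderiv ℝ ρ x u : ℝ) : ℂ) := by
  have h : HasFDerivAt (fun y : Fin 3 → ℝ => ((ρ y * y 0 : ℝ) : ℂ))
      (Complex.ofRealCLM.comp (ρ x • (ContinuousLinearMap.proj 0) + x 0 • fderiv ℝ ρ x)) x :=
    Complex.ofRealCLM.hasFDerivAt.comp x (hasFDeriv_g ρ hρ x)
  rw [h.fderiv]
  simp

lemma hasFDeriv_dR (hρ : ContDiff ℝ (⊤ : ℕ∞) ρ) (x u : Fin 3 → ℝ) :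
    HasFDerivAt (fun y => fderiv ℝ ρ y u)
      ((fderiv ℝ (fderiv ℝ ρ) x).flip u) x := by
  have h : Differentiable ℝ (fderiv ℝ ρ) := (hρ.fderiv_right (show (1 : WithTop ℕ∞) + 1 ≤ ((⊤ : ℕ∞) : WithTop ℕ∞) from WithTop.coe_le_coe.mpr (le_top : ((1:ℕ∞)+1) ≤ ⊤))).differentiable one_ne_zero
  have := (h x).hasFDerivAt.clm_apply (hasFDerivAt_const u x)
  simpa using this

lemma hasFDeriv_Qy (hρ : ContDiff ℝ (⊤ : ℕ∞) ρ) (x : Fin 3 → ℝ) (c : ℂ) (w : Fin 3 → ℂ) :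
    HasFDerivAt (fun y : Fin 3 → ℝ => ((ρ y : ℝ) : ℂ) * c +
        Complex.I * (((y 0 : ℝ) : ℂ) * ∑ j : Fin 3, w j * ((fderiv ℝ ρ y (Pi.single j 1) : ℝ) : ℂ)))
      (c • (Complex.ofRealCLM.comp (fderiv ℝ ρ x)) +
       Complex.I • ( ((x 0 : ℝ) : ℂ) •
          (∑ j : Fin 3, w j • (Complex.ofRealCLM.comp ((fderiv ℝ (fderiv ℝ ρ) x).flip (Pi.single j 1)))) +
         (∑ j : Fin 3, w j * ((fderiv ℝ ρ x (Pi.single j 1) : ℝ) : ℂ)) •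
           (Complex.ofRealCLM.comp (ContinuousLinearMap.proj 0)) )) x := by
  have h1 : HasFDerivAt (fun y => ((ρ y : ℝ) : ℂ))
      (Complex.ofRealCLM.comp (fderiv ℝ ρ x)) x :=
    Complex.ofRealCLM.hasFDerivAt.comp x ((hρ.differentiable (by simp) x).hasFDerivAt)
  have h0 : HasFDerivAt (fun y : Fin 3 → ℝ => ((y 0 : ℝ) : ℂ))
      (Complex.ofRealCLM.comp (ContinuousLinearMap.proj 0)) x :=
    Complex.ofRealCLM.hasFDerivAt.comp x (hasFDerivAt_apply 0 x)
  have hB : HasFDerivAt (fun y => ∑ j : Fin 3, w j * ((fderiv ℝ ρ y (Pi.single j 1) : ℝ) : ℂ))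
      (∑ j : Fin 3, w j • (Complex.ofRealCLM.comp ((fderiv ℝ (fderiv ℝ ρ) x).flip (Pi.single j 1)))) x := by
    apply HasFDerivAt.fun_sum
    intro j _
    exact ((Complex.ofRealCLM.hasFDerivAt.comp x (hasFDeriv_dR ρ hρ x _)).const_mul (w j))
  exact (h1.mul_const c).add ((h0.mul hB).const_mul Complex.I)

lemma extd_QQ (hρ : ContDiff ℝ (⊤ : ℕ∞) ρ) (x : Fin 3 → ℝ) (v : Fin 2 → Fin 3 → ℂ) :
    extdC (fun x v => ((ρ x : ℝ) : ℂ) * v 0 1 +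
        Complex.I * (((x 0 : ℝ) : ℂ) * ∑ j : Fin 3, v 0 j * ((fderiv ℝ ρ x (Pi.single j 1) : ℝ) : ℂ)))
      x v
    = (∑ j : Fin 3, v 0 j * ((fderiv ℝ ρ x (Pi.single j 1) : ℝ) : ℂ)) * v 1 1
      - (∑ j : Fin 3, v 1 j * ((fderiv ℝ ρ x (Pi.single j 1) : ℝ) : ℂ)) * v 0 1
      + Complex.I * (v 0 0 * (∑ j : Fin 3, v 1 j * ((fderiv ℝ ρ x (Pi.single j 1) : ℝ) : ℂ))
        - v 1 0 * (∑ j : Fin 3, v 0 j * ((fderiv ℝ ρ x (Pi.single j 1) : ℝ) : ℂ))) := by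
  have hsym : ∀ u w : Fin 3 → ℝ, fderiv ℝ (fderiv ℝ ρ) x u w = fderiv ℝ (fderiv ℝ ρ) x w u := by
    intro u w
    exact second_derivative_symmetric
      (fun y => ((hρ.differentiable (by simp)) y).hasFDerivAt)
      (((hρ.fderiv_right (show (1 : WithTop ℕ∞) + 1 ≤ ((⊤ : ℕ∞) : WithTop ℕ∞) from WithTop.coe_le_coe.mpr (le_top : ((1:ℕ∞)+1) ≤ ⊤))).differentiable one_ne_zero x).hasFDerivAt) u w
  unfold extdC
  rw [Fin.sum_univ_two, rm0 v, rm1 v]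
  simp only []
  rw [(hasFDeriv_Qy ρ hρ x (v 1 1) (v 1)).fderiv,
    (hasFDeriv_Qy ρ hρ x (v 0 1) (v 0)).fderiv]
  simp only [ContinuousLinearMap.add_apply, ContinuousLinearMap.smul_apply,
    ContinuousLinearMap.coe_comp', Function.comp_apply, ContinuousLinearMap.coe_sum',
    Finset.sum_apply, ContinuousLinearMap.flip_apply, ContinuousLinearMap.proj_apply,
    Complex.ofRealCLM_apply, smul_eq_mul, Pi.single_apply]
  rw [Fin.sum_univ_three, Fin.sum_univ_three, Fin.sum_univ_three, Fin.sum_univ_three,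
    Fin.sum_univ_three, Fin.sum_univ_three, Fin.sum_univ_three, Fin.sum_univ_three,
    Fin.sum_univ_three, Fin.sum_univ_three]
  simp only [Fin.isValue, show ((0:Fin 3) = 1) = False by simp, show ((0:Fin 3) = 2) = False by simp,
    show ((1:Fin 3) = 0) = False by simp, show ((1:Fin 3) = 2) = False by simp,
    show ((2:Fin 3) = 0) = False by simp, show ((2:Fin 3) = 1) = False by simp,
    if_true, if_false, eq_self_iff_true, Complex.ofReal_zero, Complex.ofReal_one,
    mul_zero, zero_mul, mul_one, one_mul, add_zero, zero_add]
  rw [hsym (Pi.single 1 1) (Pi.single 0 1), hsym (Pi.single 2 1) (Pi.single 0 1),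
    hsym (Pi.single 2 1) (Pi.single 1 1)]
  simp only [Fin.val_zero, Fin.val_one, pow_zero, pow_one, neg_mul, one_mul, mul_neg, mul_one]
  ring

lemma perm3_sum (f : Equiv.Perm (Fin 3) → ℂ) :
    ∑ σ : Equiv.Perm (Fin 3), f σ =
      f 1 + f (Equiv.swap 0 1) + f (Equiv.swap 0 2) + f (Equiv.swap 1 2) +
      f (Equiv.swap 0 1 * Equiv.swap 1 2) + f (Equiv.swap 1 2 * Equiv.swap 0 1) := by
  rw [show (Finset.univ : Finset (Equiv.Perm (Fin 3))) =
    {1, Equiv.swap 0 1, Equiv.swap 0 2, Equiv.swap 1 2,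
     Equiv.swap 0 1 * Equiv.swap 1 2, Equiv.swap 1 2 * Equiv.swap 0 1} from by decide]
  rw [Finset.sum_insert (by decide), Finset.sum_insert (by decide),
    Finset.sum_insert (by decide), Finset.sum_insert (by decide),
    Finset.sum_insert (by decide), Finset.sum_singleton]
  ring

lemma perm2_sum (f : Equiv.Perm (Fin 2) → ℂ) :
    ∑ σ : Equiv.Perm (Fin 2), f σ = f 1 + f (Equiv.swap 0 1) := by
  rw [show (Finset.univ : Finset (Equiv.Perm (Fin 2))) = {1, Equiv.swap 0 1} from by decide]
  rw [Finset.sum_insert (by decide), Finset.sum_singleton]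

lemma wedge12 (α : FormC 3 1) (β : FormC 3 2) (x : Fin 3 → ℝ) (v : Fin (1+2) → Fin 3 → ℂ) :
    wedgeC α β x v = (1/2 : ℂ) *
      (α x (fun _ => v 0) * β x ![v 1, v 2] - α x (fun _ => v 1) * β x ![v 0, v 2]
       - α x (fun _ => v 2) * β x ![v 1, v 0] - α x (fun _ => v 0) * β x ![v 2, v 1]
       + α x (fun _ => v 1) * β x ![v 2, v 0] + α x (fun _ => v 2) * β x ![v 0, v 1]) := by
  unfold wedgeC
  rw [perm3_sum]
  have e1 : ∀ σ : Equiv.Perm (Fin 3), (fun i : Fin 1 => v (σ (Fin.castAdd 2 i)))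
      = fun _ => v (σ 0) := by
    intro σ; funext i
    have : i = 0 := Subsingleton.elim _ _
    subst this; rfl
  have e2 : ∀ σ : Equiv.Perm (Fin 3), (fun j : Fin 2 => v (σ (Fin.natAdd 1 j)))
      = ![v (σ 1), v (σ 2)] := by
    intro σ; funext j
    fin_cases j <;> rfl
  simp only [e1, e2]
  norm_num [show ((1:Equiv.Perm (Fin 3)) 0) = 0 from rfl,
    show ((1:Equiv.Perm (Fin 3)) 1) = 1 from rfl, show ((1:Equiv.Perm (Fin 3)) 2) = 2 from rfl,
    show (Equiv.swap (0:Fin 3) 1) 0 = 1 from by decide, show (Equiv.swap (0:Fin 3) 1) 1 = 0 from by decide,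
    show (Equiv.swap (0:Fin 3) 1) 2 = 2 from by decide,
    show (Equiv.swap (0:Fin 3) 2) 0 = 2 from by decide, show (Equiv.swap (0:Fin 3) 2) 1 = 1 from by decide,
    show (Equiv.swap (0:Fin 3) 2) 2 = 0 from by decide,
    show (Equiv.swap (1:Fin 3) 2) 0 = 0 from by decide, show (Equiv.swap (1:Fin 3) 2) 1 = 2 from by decide,
    show (Equiv.swap (1:Fin 3) 2) 2 = 1 from by decide,
    show ((Equiv.swap (0:Fin 3) 1 * Equiv.swap 1 2 : Equiv.Perm (Fin 3)) 0) = 1 from by decide,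
    show ((Equiv.swap (0:Fin 3) 1 * Equiv.swap 1 2 : Equiv.Perm (Fin 3)) 1) = 2 from by decide,
    show ((Equiv.swap (0:Fin 3) 1 * Equiv.swap 1 2 : Equiv.Perm (Fin 3)) 2) = 0 from by decide,
    show ((Equiv.swap (1:Fin 3) 2 * Equiv.swap 0 1 : Equiv.Perm (Fin 3)) 0) = 2 from by decide,
    show ((Equiv.swap (1:Fin 3) 2 * Equiv.swap 0 1 : Equiv.Perm (Fin 3)) 1) = 0 from by decide,
    show ((Equiv.swap (1:Fin 3) 2 * Equiv.swap 0 1 : Equiv.Perm (Fin 3)) 2) = 1 from by decide,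
    show Equiv.Perm.sign (1 : Equiv.Perm (Fin 3)) = 1 from by decide,
    show Equiv.Perm.sign (Equiv.swap (0:Fin 3) 1) = -1 from by decide,
    show Equiv.Perm.sign (Equiv.swap (0:Fin 3) 2) = -1 from by decide,
    show Equiv.Perm.sign (Equiv.swap (1:Fin 3) 2) = -1 from by decide,
    show Equiv.Perm.sign (Equiv.swap (0:Fin 3) 1 * Equiv.swap 1 2) = 1 from by decide,
    show Equiv.Perm.sign (Equiv.swap (1:Fin 3) 2 * Equiv.swap 0 1) = 1 from by decide,
    Nat.factorial]
  ring

lemma wedge_dxdy (x : Fin 3 → ℝ) (w : Fin 2 → Fin 3 → ℂ) :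
    wedgeC dxC dyC x w = w 0 0 * w 1 1 - w 1 0 * w 0 1 := by
  unfold wedgeC dxC dyC
  rw [perm2_sum]
  norm_num [show ((1:Equiv.Perm (Fin (1+1))) (Fin.castAdd 1 0)) = 0 from rfl,
    show ((1:Equiv.Perm (Fin (1+1))) (Fin.natAdd 1 0)) = 1 from rfl,
    show ((Equiv.swap (0:Fin (1+1)) 1) (Fin.castAdd 1 0)) = 1 from by decide,
    show ((Equiv.swap (0:Fin (1+1)) 1) (Fin.natAdd 1 0)) = 0 from by decide,
    show Equiv.Perm.sign (1 : Equiv.Perm (Fin (1+1))) = 1 from by decide,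
    show Equiv.Perm.sign (Equiv.swap (0:Fin (1+1)) 1) = -1 from by decide,
    Nat.factorial]
  ring

lemma dr_eval (hρ : ContDiff ℝ (⊤ : ℕ∞) ρ) (x : Fin 3 → ℝ) (v : Fin 1 → Fin 3 → ℂ) :
    extdC (fun p (_ : Fin 0 → Fin 3 → ℂ) => ((ρ p : ℝ) : ℂ)) x v
      = ∑ j : Fin 3, v 0 j * ((fderiv ℝ ρ x (Pi.single j 1) : ℝ) : ℂ) := by
  rw [extd_zero]
  exact Finset.sum_congr rfl fun j _ => by rw [fderiv_rho_cast ρ hρ]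

lemma main2 (hρ : ContDiff ℝ (⊤ : ℕ∞) ρ) (x : Fin 3 → ℝ) (v : Fin (1+2) → Fin 3 → ℂ) :
    wedgeC (fun x v => ((ρ x : ℝ) : ℂ) * v 0 1 +
        Complex.I * (((x 0 : ℝ) : ℂ) * ∑ j : Fin 3, v 0 j * ((fderiv ℝ ρ x (Pi.single j 1) : ℝ) : ℂ)))
      (extdC (fun x v => ((ρ x : ℝ) : ℂ) * v 0 1 +
        Complex.I * (((x 0 : ℝ) : ℂ) * ∑ j : Fin 3, v 0 j * ((fderiv ℝ ρ x (Pi.single j 1) : ℝ) : ℂ))))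
      x v
    = -Complex.I * (ρ x : ℂ) *
        wedgeC (extdC (fun p (_ : Fin 0 → Fin 3 → ℂ) => ((ρ p : ℝ) : ℂ)))
          (wedgeC dxC dyC) x v := by
  rw [wedge12, wedge12]
  simp only [extd_QQ ρ hρ, dr_eval ρ hρ, wedge_dxdy,
    Matrix.cons_val_zero, Matrix.cons_val_one, Matrix.head_cons]
  rw [Fin.sum_univ_three, Fin.sum_univ_three, Fin.sum_univ_three]
  ring


/-- For `A = x dy + dz` on ℝ³ and the spinor process `Sp1 = ρ(∂/∂x + i ∂/∂y)` with `ρ`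
a smooth real function, the heat 1-form `Q = L_{Sp1} A = ρ(dy − i dx) + i d(ρ x)`
satisfies `Q ∧ dQ = − i ρ dρ ∧ dx ∧ dy`.  Hence wherever `ρ ≠ 0` and
`(dρ ∧ dx ∧ dy) ≠ 0`, the spinor process is irreversible: `Q ∧ dQ ≠ 0`. -/
theorem stmt14 (ρ : (Fin 3 → ℝ) → ℝ) (hρ : ContDiff ℝ (⊤ : ℕ∞) ρ)
    (X : (Fin 3 → ℝ) → (Fin 3 → ℂ))
    (hX : X = fun p => fun j => (ρ p : ℂ) * (![1, Complex.I, 0] j))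
    (Q : FormC 3 1) (hQ : Q = heatC X) :
    (Q = fun x v => (ρ x : ℂ) * (v 0 1 - Complex.I * v 0 0) +
        Complex.I * extdC (fun p (_ : Fin 0 → Fin 3 → ℂ) => ((ρ p * p 0 : ℝ) : ℂ)) x v) ∧
    (wedgeC Q (extdC Q) = fun x v =>
      -Complex.I * (ρ x : ℂ) *
        wedgeC (extdC (fun p (_ : Fin 0 → Fin 3 → ℂ) => ((ρ p : ℝ) : ℂ)))
          (wedgeC dxC dyC) x v) ∧
    (∀ x, ρ x ≠ 0 →
      wedgeC (extdC (fun p (_ : Fin 0 → Fin 3 → ℂ) => ((ρ p : ℝ) : ℂ)))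
          (wedgeC dxC dyC) x ≠ 0 →
      wedgeC Q (extdC Q) x ≠ 0) := by
  have hgd : Differentiable ℝ (fun p : Fin 3 → ℝ => ((ρ p * p 0 : ℝ) : ℂ)) :=
    Complex.ofRealCLM.differentiable.comp
      ((hρ.differentiable (by simp)).mul (fun x => (hasFDerivAt_apply 0 x).differentiableAt))
  have hQ1 : Q = fun x v => (ρ x : ℂ) * (v 0 1 - Complex.I * v 0 0) +
      Complex.I * extdC (fun p (_ : Fin 0 → Fin 3 → ℂ) => ((ρ p * p 0 : ℝ) : ℂ)) x v := by
    funext x v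
    rw [hQ]
    show iprodC X (extdC Adarboux) x v + extdC (iprodC X Adarboux) x v = _
    rw [heat_part1 ρ X hX, heat_part2 ρ X hX, extd_I_mul _ hgd]
  have hQ2 : Q = fun x v => ((ρ x : ℝ) : ℂ) * v 0 1 +
      Complex.I * (((x 0 : ℝ) : ℂ) *
        ∑ j : Fin 3, v 0 j * ((fderiv ℝ ρ x (Pi.single j 1) : ℝ) : ℂ)) := by
    rw [hQ1]
    funext x v
    rw [extd_zero, Fin.sum_univ_three, Fin.sum_univ_three]
    rw [fderiv_g_cast ρ hρ, fderiv_g_cast ρ hρ, fderiv_g_cast ρ hρ]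
    simp [Pi.single_apply]
    push_cast
    ring
  have h2 : wedgeC Q (extdC Q) = fun x v =>
      -Complex.I * (ρ x : ℂ) *
        wedgeC (extdC (fun p (_ : Fin 0 → Fin 3 → ℂ) => ((ρ p : ℝ) : ℂ)))
          (wedgeC dxC dyC) x v := by
    rw [hQ2]
    funext x v
    exact main2 ρ hρ x v
  refine ⟨hQ1, h2, ?_⟩
  intro x hx hW h0
  obtain ⟨v, hv⟩ := Function.ne_iff.mp hW
  have := congrFun h0 v
  rw [congrFun (congrFun h2 x) v] at this
  exact hv (by
    have hne : (-Complex.I * (ρ x : ℂ)) ≠ 0 :=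
      mul_ne_zero (neg_ne_zero.mpr Complex.I_ne_zero) (Complex.ofReal_ne_zero.mpr hx)
    simpa [hne] using (mul_eq_zero.mp this).resolve_left hne)
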